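/- arXiv:math/0409228 — 5 statements merged into one kernel-verified Lean document; each statement's English description precedes it below -/
import Mathlib

section
/- If D is a strong s-quadrangular digraph in which every vertex has out-degree at most 3 and in-degree at most 3, then D is hamiltonian. -/
/-- Out-neighborhood of `x` in the digraph with arc relation `A`. -/
def outN {V : Type*} (A : V → V → Prop) (x : V) : Set V := {y | A x y}

/-- In-neighborhood of `x` in the digraph with arc relation `A`. -/
def inN {V : Type*} (A : V → V → Prop) (x : V) : Set V := {y | A y x}

/-- `S` is a q-set for the neighborhood function `N`: it has at least two
vertices and every member shares an `N`-neighbor with another member. -/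
def IsQSet {V : Type*} (N : V → Set V) (S : Set V) : Prop :=
  2 ≤ S.ncard ∧ ∀ u ∈ S, ∃ v ∈ S, v ≠ u ∧ (N u ∩ N v).Nonempty

/-- The union of all pairwise common `N`-neighborhoods of distinct members of `S`. -/
def commonUnion {V : Type*} (N : V → Set V) (S : Set V) : Set V :=
  {w | ∃ u ∈ S, ∃ v ∈ S, u ≠ v ∧ w ∈ N u ∧ w ∈ N v}

/-- A digraph is s-quadrangular if every q⁺-set and every q⁻-set `S` has
pairwise common neighborhood union of size at least `|S|`. -/
def SQuadD {V : Type*} (A : V → V → Prop) : Prop :=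
  (∀ S : Set V, IsQSet (outN A) S → S.ncard ≤ (commonUnion (outN A) S).ncard) ∧
  (∀ S : Set V, IsQSet (inN A) S → S.ncard ≤ (commonUnion (inN A) S).ncard)

/-- A digraph is strong if there is a directed path between every ordered pair. -/
def StrongD {V : Type*} (A : V → V → Prop) : Prop :=
  ∀ x y : V, Relation.ReflTransGen A x y

/-- A cycle factor of a loopless digraph, encoded as a fixed-point-free
permutation following the arcs: its cycles are the vertex-disjoint directed
cycles covering all vertices. -/
def IsCycleFactor {V : Type*} (A : V → V → Prop) (σ : Equiv.Perm V) : Prop :=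
  ∀ v, A v (σ v) ∧ σ v ≠ v

/-!
By Hall's theorem, whose condition follows from the q⁺-set inequality, the digraph has a cycle
factor `σ`; take one with the fewest cycles. Then no two cycles can be merged by exchanging the
successors of one vertex on each, and s-quadrangularity with the degree bound pins down an arc
`x → σ y` leaving the cycle of `x`: `N⁺(x) = {σ x, σ y, σ z}`, where `z` lies on the cycle of `x`
and `y → σ z` again leaves its cycle. Iterating from `a₀ → σ a₁` gives tails `a₀, a₁, a₂, …`
alternating between two cycles. If `a₃ → σ a₀` is an arc, rotating the successors of
`a₀, …, a₃` merges the two cycles; otherwise `σ a₂` is the only common out-neighbour of `a₀` and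
`a₂`, against s-quadrangularity. So no arc leaves a cycle of `σ`, and by strong connectivity `σ`
is a single cycle.
-/

open Function Set

namespace Equiv.Perm

variable {V : Type*}

/-- The number of cycles of `σ`, fixed points counted as cycles of length one. -/
noncomputable def numCycles (σ : Perm V) : ℕ := Nat.card (Quotient (SameCycle.setoid σ))

variable {σ σ' : Perm V} {B : Set V}

theorem sameCycle_iterate (σ : Perm V) (x : V) (k : ℕ) : σ.SameCycle x (σ^[k] x) :=
  (SameCycle.refl σ x).pow_right (n := k)

theorem iterate_eq_of_eqOn_compl (hagree : EqOn σ' σ Bᶜ) {p : V} {k : ℕ}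
    (hk : ∀ j < k, σ^[j] p ∉ B) : σ'^[k] p = σ^[k] p := by
  induction k with
  | zero => rfl
  | succ k ih =>
    rw [iterate_succ_apply', iterate_succ_apply', ih fun j hj => hk j (by omega),
      hagree (hk k k.lt_succ_self)]

variable [Finite V]

theorem exists_first_mem_of_eqOn_compl (hagree : EqOn σ' σ Bᶜ) {p b : V} (hb : b ∈ B)
    (hpb : σ.SameCycle p b) :
    ∃ k, σ^[k] p ∈ B ∧ σ'.SameCycle p (σ^[k] p) ∧ ∀ j < k, σ^[j] p ∉ B := by
  classical
  have hex : ∃ k, σ^[k] p ∈ B := by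
    obtain ⟨k, rfl⟩ := hpb.exists_nat_pow_eq
    exact ⟨k, hb⟩
  refine ⟨Nat.find hex, Nat.find_spec hex, ?_, fun j => Nat.find_min hex⟩
  rw [← iterate_eq_of_eqOn_compl hagree fun j => Nat.find_min hex]
  exact sameCycle_iterate σ' p _

theorem sameCycle_iff_of_eqOn_compl (hagree : EqOn σ' σ Bᶜ) {v u : V}
    (hv : ∀ b ∈ B, ¬σ.SameCycle v b) : σ'.SameCycle v u ↔ σ.SameCycle v u := by
  have hit : ∀ k, σ'^[k] v = σ^[k] v := fun k =>
    iterate_eq_of_eqOn_compl hagree fun j _ hj => hv _ hj (sameCycle_iterate σ v j)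
  constructor
  · rintro h
    obtain ⟨k, rfl⟩ := h.exists_nat_pow_eq
    rw [coe_pow, hit]
    exact sameCycle_iterate σ v k
  · rintro h
    obtain ⟨k, rfl⟩ := h.exists_nat_pow_eq
    rw [coe_pow, ← hit]
    exact sameCycle_iterate σ' v k

theorem sameCycle_apply_of_eqOn_compl (hagree : EqOn σ' σ Bᶜ) {e t : V} (ht : t ∈ B)
    (het : σ.SameCycle e t) (honly : ∀ b ∈ B, σ.SameCycle b e → b = e ∨ b = t) :
    σ'.SameCycle (σ e) t := by
  obtain ⟨k, hkB, hk, hmin⟩ :=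
    exists_first_mem_of_eqOn_compl hagree ht (sameCycle_apply_left.mpr het)
  rcases honly _ hkB ((sameCycle_iterate σ _ k).symm.trans (sameCycle_apply_left.mpr (.refl σ e)))
    with he | he
  · by_cases hte : t = e
    · subst hte
      rwa [he] at hk
    -- the orbit of `σ e` returns to `e` after `k + 1` steps, so it meets `t` within them
    have hper : IsPeriodicPt σ (k + 1) (σ e) := by
      rw [IsPeriodicPt, IsFixedPt, iterate_succ_apply', he]
    obtain ⟨i, hi⟩ := (sameCycle_apply_left.mpr het).exists_nat_pow_eq
    rw [coe_pow, ← hper.iterate_mod_apply] at hi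
    rcases Nat.lt_succ_iff_lt_or_eq.mp (Nat.mod_lt i k.succ_pos) with hlt | heq
    · exact absurd (hi ▸ ht) (hmin _ hlt)
    · exact absurd (by rw [← hi, heq, he]) hte
  · exact he ▸ hk

theorem numCycles_lt_of_eqOn_compl (hagree : EqOn σ' σ Bᶜ) {x y : V}
    (hxy : ¬σ.SameCycle x y) (hx : x ∈ B) (hy : y ∈ B)
    (hB : ∀ b ∈ B, σ.SameCycle b x ∨ σ.SameCycle b y) (hconn : ∀ b ∈ B, σ'.SameCycle b x) :
    σ'.numCycles < σ.numCycles := by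
  classical
  let M : V → Prop := fun v => σ.SameCycle v x ∨ σ.SameCycle v y
  have hM : ∀ {v u}, σ.SameCycle v u → M u → M v := fun h hu => hu.imp h.trans h.trans
  have hin : ∀ v, M v → σ'.SameCycle v x := by
    rintro v hv
    obtain ⟨k, hkB, hk, -⟩ := hv.elim (exists_first_mem_of_eqOn_compl hagree hx)
      (exists_first_mem_of_eqOn_compl hagree hy)
    exact hk.trans (hconn _ hkB)
  have hout : ∀ v, ¬M v → ∀ u, σ'.SameCycle v u ↔ σ.SameCycle v u := fun v hv u =>
    sameCycle_iff_of_eqOn_compl hagree fun b hb hvb => hv (hM hvb (hB b hb))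
  let f : V → Quotient (SameCycle.setoid σ) := fun v => ⟦if M v then x else v⟧
  have hf : ∀ v u, f v = f u ↔ σ'.SameCycle v u := by
    intro v u
    simp only [f, Quotient.eq]
    by_cases hv : M v <;> by_cases hu : M u <;> simp only [hv, hu, if_true, if_false]
    · exact iff_of_true (SameCycle.refl σ x) ((hin v hv).trans (hin u hu).symm)
    · exact ⟨fun h => absurd (hM h.symm (Or.inl (SameCycle.refl σ x))) hu,
        fun h => absurd (hM ((hout u hu v).mp h.symm) hv) hu⟩
    · exact ⟨fun h => absurd (hM h (Or.inl (SameCycle.refl σ x))) hv,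
        fun h => absurd (hM ((hout v hv u).mp h) hu) hv⟩
    · exact (hout v hv u).symm
  let g : Quotient (SameCycle.setoid σ') → Quotient (SameCycle.setoid σ) :=
    Quotient.lift f fun v u h => (hf v u).mpr h
  have hg : Injective g := by
    rintro ⟨v⟩ ⟨u⟩ h
    exact Quotient.sound ((hf v u).mp h)
  have hy' : ⟦y⟧ ∉ range g := by
    rintro ⟨⟨v⟩, hv⟩
    change ⟦if M v then x else v⟧ = _ at hv
    split_ifs at hv with h
    · exact hxy (Quotient.exact hv)
    · exact h (Or.inr (Quotient.exact hv))
  have := Fintype.ofFinite V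
  have := Fintype.ofFinite (Quotient (SameCycle.setoid σ))
  have := Fintype.ofFinite (Quotient (SameCycle.setoid σ'))
  simpa only [numCycles, Nat.card_eq_fintype_card] using
    Fintype.card_lt_of_injective_of_notMem g hg hy'

variable [DecidableEq V]

theorem numCycles_mul_swap_lt {a b : V} (hab : ¬σ.SameCycle a b) :
    (σ * swap a b).numCycles < σ.numCycles := by
  have hagree : EqOn (⇑(σ * swap a b)) σ ({a, b} : Set V)ᶜ := fun v hv => by
    simp only [mem_compl_iff, mem_insert_iff, mem_singleton_iff, not_or] at hv
    rw [mul_apply, swap_apply_of_ne_of_ne hv.1 hv.2]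
  refine numCycles_lt_of_eqOn_compl hagree hab (by simp) (by simp) ?_ ?_
  · rintro c (rfl | rfl)
    exacts [Or.inl (.refl σ c), Or.inr (.refl σ c)]
  · have hba : (σ * swap a b).SameCycle (σ a) a := by
      refine sameCycle_apply_of_eqOn_compl hagree (by simp) (.refl σ a) ?_
      rintro c (rfl | rfl) hc
      exacts [Or.inl rfl, absurd hc.symm hab]
    rintro c (rfl | rfl)
    · exact .refl _ c
    · exact (sameCycle_apply_right.mpr (.refl _ c)).trans (by simpa using hba)

theorem exists_numCycles_lt_of_rotation {a₀ a₁ a₂ a₃ : V} (h02 : σ.SameCycle a₀ a₂)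
    (h13 : σ.SameCycle a₁ a₃) (h01 : ¬σ.SameCycle a₀ a₁) (ne02 : a₀ ≠ a₂) (ne13 : a₁ ≠ a₃) :
    ∃ σ' : Perm V, σ' a₀ = σ a₁ ∧ σ' a₁ = σ a₂ ∧ σ' a₂ = σ a₃ ∧ σ' a₃ = σ a₀ ∧
      EqOn σ' σ ({a₀, a₁, a₂, a₃} : Set V)ᶜ ∧ σ'.numCycles < σ.numCycles := by
  have ne01 : a₀ ≠ a₁ := fun h => h01 (h ▸ .refl σ a₀)
  have ne03 : a₀ ≠ a₃ := fun h => h01 (h ▸ h13.symm)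
  have ne12 : a₁ ≠ a₂ := fun h => h01 (h ▸ h02)
  have ne23 : a₂ ≠ a₃ := fun h => h01 (h02.trans (h ▸ h13.symm))
  set σ' := σ * (swap a₀ a₁ * swap a₁ a₂ * swap a₂ a₃)
  have hagree : EqOn σ' σ ({a₀, a₁, a₂, a₃} : Set V)ᶜ := fun v hv => by
    simp only [mem_compl_iff, mem_insert_iff, mem_singleton_iff, not_or] at hv
    simp [σ', swap_apply_of_ne_of_ne, hv]
  obtain ⟨h0, h1, h2, h3⟩ : σ' a₀ = σ a₁ ∧ σ' a₁ = σ a₂ ∧ σ' a₂ = σ a₃ ∧ σ' a₃ = σ a₀ := by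
    simp [σ', swap_apply_def, ne01, ne02, ne03, ne12, ne13, ne02.symm,
      ne03.symm, ne12.symm, ne13.symm, ne23.symm]
  refine ⟨σ', h0, h1, h2, h3, hagree, ?_⟩
  have only0 : ∀ b ∈ ({a₀, a₁, a₂, a₃} : Set V), σ.SameCycle b a₀ → b = a₀ ∨ b = a₂ := by
    rintro b (rfl | rfl | rfl | rfl) hb
    exacts [Or.inl rfl, absurd hb.symm h01, Or.inr rfl, absurd (h13.trans hb).symm h01]
  have only1 : ∀ b ∈ ({a₀, a₁, a₂, a₃} : Set V), σ.SameCycle b a₁ → b = a₁ ∨ b = a₃ := by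
    rintro b (rfl | rfl | rfl | rfl) hb
    exacts [absurd hb h01, Or.inl rfl, absurd (h02.trans hb) h01, Or.inr rfl]
  have jump : ∀ {s e t}, σ' s = σ e → t ∈ ({a₀, a₁, a₂, a₃} : Set V) → σ.SameCycle e t →
      (∀ b ∈ ({a₀, a₁, a₂, a₃} : Set V), σ.SameCycle b e → b = e ∨ b = t) →
      σ'.SameCycle s t := fun hs ht het honly =>
    (sameCycle_apply_right.mpr (.refl σ' _)).trans
      (hs ▸ sameCycle_apply_of_eqOn_compl hagree ht het honly)
  have j1 : σ'.SameCycle a₁ a₀ := jump h1 (by simp) h02.symm fun b hb hb2 =>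
    (only0 b hb (hb2.trans h02.symm)).symm
  have j2 : σ'.SameCycle a₂ a₁ := jump h2 (by simp) h13.symm fun b hb hb3 =>
    (only1 b hb (hb3.trans h13.symm)).symm
  have j3 : σ'.SameCycle a₃ a₂ := jump h3 (by simp) h02 only0
  refine numCycles_lt_of_eqOn_compl hagree h01 (by simp) (by simp) ?_ ?_
  · rintro b (rfl | rfl | rfl | rfl)
    exacts [Or.inl (.refl σ b), Or.inr (.refl σ b), Or.inl h02.symm, Or.inr h13.symm]
  · rintro b (rfl | rfl | rfl | rfl)
    exacts [.refl σ' b, j1, j2.trans j1, j3.trans (j2.trans j1)]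

end Equiv.Perm

section Digraph

open Equiv Equiv.Perm Set

variable {V : Type*}

theorem exists_ne_mem_inter_of_mem_inter [Finite V] {N : V → Set V}
    (hq : ∀ S, IsQSet N S → S.ncard ≤ (commonUnion N S).ncard) {a b c : V} (hab : a ≠ b)
    (hc : c ∈ N a ∩ N b) : ∃ d ∈ N a ∩ N b, d ≠ c := by
  have hS : IsQSet N {a, b} := by
    refine ⟨(ncard_pair hab).ge, ?_⟩
    rintro u (rfl | rfl)
    exacts [⟨b, by simp, hab.symm, c, hc⟩, ⟨a, by simp, hab, c, hc.2, hc.1⟩]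
  have hsub : commonUnion N {a, b} ⊆ N a ∩ N b := by
    rintro w ⟨u, hu, v, hv, huv, hwu, hwv⟩
    rcases hu with rfl | rfl <;> rcases hv with rfl | rfl
    exacts [absurd rfl huv, ⟨hwu, hwv⟩, ⟨hwv, hwu⟩, absurd rfl huv]
  have h2 := (hq _ hS).trans (ncard_le_ncard hsub (toFinite _))
  rw [ncard_pair hab] at h2
  exact exists_ne_of_one_lt_ncard h2 c

/-- Exchanging the successors of two vertices on different cycles of `σ` would merge the two
cycles; this never produces arcs of `A`. -/
structure SwapStable (A : V → V → Prop) (σ : Perm V) : Prop where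
  arc : ∀ v, A v (σ v)
  not_swap : ∀ a b, ¬σ.SameCycle a b → ¬(A a (σ b) ∧ A b (σ a))

namespace SwapStable

variable {A : V → V → Prop} {σ : Perm V}

theorem flip (hσ : SwapStable A σ) : SwapStable (flip A) σ⁻¹ where
  arc v := show A (σ⁻¹ v) v by simpa using hσ.arc (σ⁻¹ v)
  not_swap a b hab h := hσ.not_swap (σ⁻¹ b) (σ⁻¹ a) (by simpa [sameCycle_comm] using hab)
    ⟨by simpa using show A (σ⁻¹ b) a from h.1, by simpa using show A (σ⁻¹ a) b from h.2⟩

variable [Finite V] {x y : V}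

theorem exists_outN_eq (hσ : SwapStable A σ)
    (hq : ∀ S, IsQSet (outN A) S → S.ncard ≤ (commonUnion (outN A) S).ncard)
    (hdeg : ∀ v, (outN A v).ncard ≤ 3) (hxy : A x (σ y)) (hc : ¬σ.SameCycle x y) :
    ∃ w, A y w ∧ w ≠ σ x ∧ w ≠ σ y ∧ outN A x = {σ x, σ y, w} := by
  have hne : x ≠ y := fun h => hc (h ▸ .refl σ x)
  obtain ⟨w, ⟨hxw, hyw⟩, hwy⟩ :=
    exists_ne_mem_inter_of_mem_inter hq hne (show σ y ∈ outN A x ∩ outN A y from ⟨hxy, hσ.arc y⟩)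
  have hwx : w ≠ σ x := fun h => hσ.not_swap x y hc ⟨hxy, h ▸ hyw⟩
  refine ⟨w, hyw, hwx, hwy, (eq_of_subset_of_ncard_le ?_ ?_ (toFinite _)).symm⟩
  · rintro v (rfl | rfl | rfl)
    exacts [hσ.arc x, hxy, hxw]
  · rw [ncard_eq_three.mpr ⟨_, _, _, fun h => hne (σ.injective h), hwx.symm, hwy.symm, rfl⟩]
    exact hdeg x

theorem exists_inN_eq (hσ : SwapStable A σ)
    (hq : ∀ S, IsQSet (inN A) S → S.ncard ≤ (commonUnion (inN A) S).ncard)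
    (hdeg : ∀ v, (inN A v).ncard ≤ 3) (hxy : A x (σ y)) (hc : ¬σ.SameCycle x y) :
    ∃ z, A z (σ x) ∧ z ≠ x ∧ z ≠ y ∧ inN A (σ y) = {y, x, z} := by
  obtain ⟨z, hz, hzy, hzx, hin⟩ := hσ.flip.exists_outN_eq hq hdeg (x := σ y) (y := σ x)
    (show A (σ⁻¹ (σ x)) (σ y) by simpa using hxy) (by simpa [sameCycle_comm] using hc)
  refine ⟨z, hz, by simpa using hzx, by simpa using hzy, ?_⟩
  simpa using show inN A (σ y) = _ from hin

theorem sameCycle_of_outN_eq (hσ : SwapStable A σ) (hsq : SQuadD A)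
    (hdeg : ∀ v, (outN A v).ncard ≤ 3 ∧ (inN A v).ncard ≤ 3) (hxy : A x (σ y))
    (hc : ¬σ.SameCycle x y) {w : V} (hwx : w ≠ σ x) (hwy : w ≠ σ y)
    (hout : outN A x = {σ x, σ y, w}) : σ.SameCycle w x := by
  have hxw : A x w := show w ∈ outN A x by rw [hout]; simp
  by_contra hwc
  set u := σ⁻¹ w
  have hw : w = σ u := (σ.apply_symm_apply w).symm
  have hxu : ¬σ.SameCycle x u := fun h => hwc (by simpa [u] using h.symm)
  -- the arc `x → w` also leaves the cycle of `x`, so its third out-neighbour is `σ y`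
  obtain ⟨w₂, huw₂, hw₂x, hw₂u, hout₂⟩ := hσ.exists_outN_eq hsq.1 (fun v => (hdeg v).1)
    (hw ▸ hxw) hxu
  have hw₂y : w₂ = σ y := by
    have : w₂ ∈ outN A x := hout₂ ▸ by simp
    rw [hout] at this
    rcases this with h | h | h
    exacts [absurd h hw₂x, h, absurd (h.trans hw) hw₂u]
  obtain ⟨z, hzx, -, -, hin⟩ := hσ.exists_inN_eq hsq.2 (fun v => (hdeg v).2) hxy hc
  have hu : u ∈ inN A (σ y) := show A u (σ y) from hw₂y ▸ huw₂
  rw [hin] at hu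
  rcases hu with h | h | h
  · exact hwy (by rw [hw, h])
  · exact hwx (by rw [hw, h])
  · exact hσ.not_swap x u hxu ⟨hw ▸ hxw, h ▸ hzx⟩

theorem exists_next (hσ : SwapStable A σ) (hsq : SQuadD A)
    (hdeg : ∀ v, (outN A v).ncard ≤ 3 ∧ (inN A v).ncard ≤ 3) (hxy : A x (σ y))
    (hc : ¬σ.SameCycle x y) :
    ∃ z, A y (σ z) ∧ ¬σ.SameCycle y z ∧ σ.SameCycle x z ∧ z ≠ x ∧
      outN A x = {σ x, σ y, σ z} := by
  obtain ⟨w, hyw, hwx, hwy, hout⟩ := hσ.exists_outN_eq hsq.1 (fun v => (hdeg v).1) hxy hc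
  have hwx' : σ.SameCycle (σ⁻¹ w) x := by
    simpa using hσ.sameCycle_of_outN_eq hsq hdeg hxy hc hwx hwy hout
  have hxw := hwx'.symm
  refine ⟨σ⁻¹ w, by simpa using hyw, fun h => hc (hxw.trans h.symm), hxw, ?_, by simpa using hout⟩
  rintro rfl
  exact hwx (σ.apply_symm_apply w).symm

theorem exists_rotation (hσ : SwapStable A σ) (hsq : SQuadD A)
    (hdeg : ∀ v, (outN A v).ncard ≤ 3 ∧ (inN A v).ncard ≤ 3) {a₀ a₁ : V} (h01 : A a₀ (σ a₁))
    (hc01 : ¬σ.SameCycle a₀ a₁) :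
    ∃ a₂ a₃, A a₁ (σ a₂) ∧ A a₂ (σ a₃) ∧ A a₃ (σ a₀) ∧
      σ.SameCycle a₀ a₂ ∧ σ.SameCycle a₁ a₃ ∧ a₂ ≠ a₀ ∧ a₃ ≠ a₁ := by
  obtain ⟨a₂, h12, hc12, s02, ne20, hout₀⟩ := hσ.exists_next hsq hdeg h01 hc01
  obtain ⟨a₃, h23, hc23, s13, ne31, -⟩ := hσ.exists_next hsq hdeg h12 hc12
  obtain ⟨a₄, h34, -, s24, -, hout₂⟩ := hσ.exists_next hsq hdeg h23 hc23
  refine ⟨a₂, a₃, h12, h23, ?_, s02, s13, ne20, ne31⟩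
  by_contra h30
  have ne40 : a₄ ≠ a₀ := fun h => h30 (h ▸ h34)
  -- otherwise `σ a₂` would be the only common out-neighbour of `a₀` and `a₂`
  obtain ⟨d, ⟨hd₀, hd₂⟩, hd⟩ := exists_ne_mem_inter_of_mem_inter hsq.1 ne20.symm
    (c := σ a₂) ⟨hout₀ ▸ by simp, hout₂ ▸ by simp⟩
  rw [hout₀] at hd₀
  rw [hout₂] at hd₂
  have hc03 : ¬σ.SameCycle a₀ a₃ := fun h => hc01 (h.trans s13.symm)
  have hc14 : ¬σ.SameCycle a₁ a₄ := fun h => hc01 (s02.trans (s24.trans h.symm))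
  rcases hd₀ with rfl | rfl | rfl
  · rcases hd₂ with h | h | h
    · exact hd h
    · exact hc03 (σ.injective h ▸ .refl σ a₀)
    · exact ne40 (σ.injective h).symm
  · rcases hd₂ with h | h | h
    · exact hd h
    · exact ne31 (σ.injective h).symm
    · exact hc14 (σ.injective h ▸ .refl σ a₁)
  · exact hd rfl

end SwapStable

end Digraph

section Hamiltonian

open Equiv Equiv.Perm Set

variable {V : Type*} {A : V → V → Prop}

/-- A set of tails either contains a vertex whose out-neighbours are private, or is a q⁺-set
whose common out-neighbours alone are numerous enough. -/
theorem card_le_card_biUnion_outN [Fintype V] [DecidableEq V] [DecidableRel A]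
    (hq : ∀ S, IsQSet (outN A) S → S.ncard ≤ (commonUnion (outN A) S).ncard)
    (hne : ∀ v, (outN A v).Nonempty) (s : Finset V) :
    s.card ≤ (s.biUnion fun v => Finset.univ.filter (A v)).card := by
  set t : V → Finset V := fun v => Finset.univ.filter (A v)
  induction s using Finset.strongInduction with
  | H s ih =>
    by_cases hsplit : ∃ u ∈ s, ∀ v ∈ s, v ≠ u → Disjoint (t u) (t v)
    · obtain ⟨u, hu, hdisj⟩ := hsplit
      have hunion : s.biUnion t = t u ∪ (s.erase u).biUnion t := by
        rw [← Finset.biUnion_insert, Finset.insert_erase hu]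
      have hdisj' : Disjoint (t u) ((s.erase u).biUnion t) :=
        (Finset.disjoint_biUnion_right _ _ _).mpr fun v hv =>
          hdisj v (Finset.mem_of_mem_erase hv) (Finset.ne_of_mem_erase hv)
      have hpos : 0 < (t u).card := by
        obtain ⟨w, hw⟩ := hne u
        exact Finset.card_pos.mpr ⟨w, by simpa [t, outN] using hw⟩
      have := ih _ (Finset.erase_ssubset hu)
      rw [hunion, Finset.card_union_of_disjoint hdisj', ← Finset.card_erase_add_one hu]
      omega
    · push Not at hsplit
      obtain rfl | ⟨u, hu⟩ := s.eq_empty_or_nonempty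
      · simp
      have hS : IsQSet (outN A) ↑s := by
        refine ⟨?_, fun u hu => ?_⟩
        · obtain ⟨v, hv, hvu, -⟩ := hsplit u hu
          rw [ncard_coe_finset]
          exact Finset.one_lt_card.mpr ⟨u, hu, v, hv, hvu.symm⟩
        · obtain ⟨v, hv, hvu, hnd⟩ := hsplit u hu
          obtain ⟨w, hwu, hwv⟩ := Finset.not_disjoint_iff.mp hnd
          exact ⟨v, hv, hvu, w, by simpa [t, outN] using hwu, by simpa [t, outN] using hwv⟩
      have hsub : commonUnion (outN A) ↑s ⊆ ↑(s.biUnion t) := by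
        rintro w ⟨u, hu, -, -, -, hw, -⟩
        simpa [t] using ⟨u, hu, hw⟩
      calc s.card = (s : Set V).ncard := (ncard_coe_finset s).symm
        _ ≤ (commonUnion (outN A) ↑s).ncard := hq _ hS
        _ ≤ (↑(s.biUnion t) : Set V).ncard := ncard_le_ncard hsub (toFinite _)
        _ = (s.biUnion t).card := ncard_coe_finset _

theorem exists_perm_forall_arc [Fintype V]
    (hq : ∀ S, IsQSet (outN A) S → S.ncard ≤ (commonUnion (outN A) S).ncard)
    (hne : ∀ v, (outN A v).Nonempty) : ∃ σ : Perm V, ∀ v, A v (σ v) := by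
  classical
  obtain ⟨f, hf, hft⟩ := (Finset.all_card_le_biUnion_card_iff_exists_injective _).mp
    (card_le_card_biUnion_outN hq hne)
  exact ⟨Equiv.ofBijective f (Finite.injective_iff_bijective.mp hf), fun v => by
    simpa using hft v⟩

variable [Finite V] [DecidableEq V] {σ : Perm V}

theorem swapStable_of_minimal (harc : ∀ v, A v (σ v))
    (hmin : ∀ τ : Perm V, (∀ v, A v (τ v)) → σ.numCycles ≤ τ.numCycles) : SwapStable A σ := by
  refine ⟨harc, fun a b hab ⟨hab', hba⟩ =>
    (hmin (σ * swap a b) fun v => ?_).not_gt (numCycles_mul_swap_lt hab)⟩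
  rw [mul_apply]
  rcases eq_or_ne v a with rfl | hva
  · simpa using hab'
  rcases eq_or_ne v b with rfl | hvb
  · simpa using hba
  · simpa [swap_apply_of_ne_of_ne hva hvb] using harc v

theorem sameCycle_of_minimal (hsq : SQuadD A)
    (hdeg : ∀ v, (outN A v).ncard ≤ 3 ∧ (inN A v).ncard ≤ 3) (harc : ∀ v, A v (σ v))
    (hmin : ∀ τ : Perm V, (∀ v, A v (τ v)) → σ.numCycles ≤ τ.numCycles) {x y : V}
    (hxy : A x y) : σ.SameCycle x y := by
  by_contra hc
  have hc' : ¬σ.SameCycle x (σ⁻¹ y) := by simpa using hc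
  obtain ⟨a₂, a₃, h12, h23, h30, s02, s13, ne20, ne31⟩ :=
    (swapStable_of_minimal harc hmin).exists_rotation hsq hdeg (by simpa using hxy) hc'
  obtain ⟨σ', h0, h1, h2, h3, hagree, hlt⟩ :=
    exists_numCycles_lt_of_rotation s02 s13 hc' ne20.symm ne31.symm
  refine (hmin σ' fun v => ?_).not_gt hlt
  by_cases hv : v ∈ ({x, σ⁻¹ y, a₂, a₃} : Set V)
  · rcases hv with rfl | rfl | rfl | rfl
    · simpa [h0] using hxy
    · exact h1 ▸ h12
    · exact h2 ▸ h23
    · exact h3 ▸ h30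
  · exact hagree hv ▸ harc v

end Hamiltonian

/-- A strong s-quadrangular digraph with all out- and in-degrees at most 3 is
hamiltonian: it has a Hamilton cycle, i.e. a single directed cycle through all
vertices (encoded as a cyclic permutation `σ` with full support following the arcs). -/
theorem strong_squad_maxdeg_three_hamiltonian {V : Type*} [Fintype V] [DecidableEq V]
    (A : V → V → Prop) (hloopless : ∀ v, ¬ A v v) (hcard : 2 ≤ Fintype.card V)
    (hstrong : StrongD A) (hsq : SQuadD A)
    (hdeg : ∀ v, (outN A v).ncard ≤ 3 ∧ (inN A v).ncard ≤ 3) :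
    ∃ σ : Equiv.Perm V, (∀ v, A v (σ v)) ∧ σ.IsCycle ∧ σ.support = Finset.univ := by
  have hne : ∀ v, (outN A v).Nonempty := fun v => by
    obtain ⟨w, hw⟩ := Fintype.exists_ne_of_one_lt_card hcard v
    obtain ⟨c, hc, -⟩ := (hstrong v w).cases_head.resolve_left hw.symm
    exact ⟨c, hc⟩
  obtain ⟨σ, hσ, hmin⟩ := Set.exists_min_image {σ : Equiv.Perm V | ∀ v, A v (σ v)}
    Equiv.Perm.numCycles (Set.toFinite _) (exists_perm_forall_arc hsq.1 hne)
  have hfix : ∀ v, σ v ≠ v := fun v h => hloopless v (by simpa only [h] using hσ v)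
  have hall : ∀ u v, σ.SameCycle u v := fun u v => by
    induction hstrong u v with
    | refl => exact .refl σ u
    | tail _ hbc ih => exact ih.trans (sameCycle_of_minimal hsq hdeg hσ hmin hbc)
  obtain ⟨v₀⟩ : Nonempty V := Fintype.card_pos_iff.mp (by omega)
  exact ⟨σ, hσ, ⟨v₀, hfix v₀, fun v _ => hall v₀ v⟩,
    Finset.eq_univ_of_forall fun v => Equiv.Perm.mem_support.mpr (hfix v)⟩
end

section
/- Let F = C₁ ∪ ⋯ ∪ C_t be a cycle factor of a digraph D with the minimum possible number t ≥ 2 of cycles. If u is a vertex of C_i and v a vertex of C_j with i ≠ j, then at least one of the arcs u→v⁺ and v→u⁺ is absent from D, where u⁺ denotes the successor of u on its cycle. -/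
namespace Equiv.Perm
variable {α : Type*}

/-- `f` has finite order, so the orbit of `f a` returns to `a` through points where `h` applies. -/
theorem SameCycle.rel_of_forall_ne [Finite α] {f : Perm α} {r : α → α → Prop}
    (hr : Equivalence r) {a : α} (h : ∀ x ≠ a, r x (f x)) {x y : α} (hxy : f.SameCycle x y) :
    r x y := by
  have hstep : ∀ x, r x (f x) := by
    intro x
    rcases ne_or_eq x a with hx | rfl
    · exact h x hx
    have hchain : ∀ k : ℕ, r (f x) ((f ^ (k + 1)) x) := by
      intro k
      induction k with
      | zero => exact hr.refl _
      | succ k ih =>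
        rw [pow_succ', mul_apply]
        rcases ne_or_eq ((f ^ (k + 1)) x) x with hk | hk
        · exact hr.trans ih (h _ hk)
        · rw [hk]; exact hr.refl _
    have := hchain (orderOf f - 1)
    rw [Nat.sub_add_cancel (orderOf_pos f), pow_orderOf_eq_one, one_apply] at this
    exact hr.symm this
  have hpow : ∀ (n : ℕ) x, r x ((f ^ n) x) := by
    intro n x
    induction n with
    | zero => exact hr.refl _
    | succ n ih => rw [pow_succ', mul_apply]; exact hr.trans ih (hstep _)
  obtain ⟨n, -, rfl⟩ := hxy.exists_nat_pow_eq
  exact hpow n x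

variable [DecidableEq α] {c₁ c₂ : Perm α} {u v : α}

theorem Disjoint.sameCycle_mul_mul_swap_apply (hd : c₁.Disjoint c₂) (hv : c₂ v ≠ v)
    {x : α} (hxu : x ≠ u) : (c₁ * c₂ * swap u v).SameCycle x (c₁ x) := by
  rcases eq_or_ne x v with rfl | hxv
  · rw [(hd x).resolve_right hv]
  rcases hd x with hx | hx
  · rw [hx]
  · refine ⟨1, ?_⟩
    simp [swap_apply_of_ne_of_ne hxu hxv, hx]

theorem Disjoint.isCycle_mul_mul_swap [Finite α] (hd : c₁.Disjoint c₂) (h₁ : c₁.IsCycle)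
    (h₂ : c₂.IsCycle) (hu : c₁ u ≠ u) (hv : c₂ v ≠ v) : (c₁ * c₂ * swap u v).IsCycle := by
  set m := c₁ * c₂ * swap u v
  have hm : c₂ * c₁ * swap v u = m := by rw [hd.symm.commute.eq, swap_comm]
  have hc₁ : ∀ {x}, c₁.SameCycle u x → m.SameCycle u x :=
    SameCycle.rel_of_forall_ne (SameCycle.equivalence m)
      fun _ => hd.sameCycle_mul_mul_swap_apply hv
  have hc₂ : ∀ {x}, c₂.SameCycle v x → m.SameCycle v x := by
    rw [← hm]
    exact SameCycle.rel_of_forall_ne (SameCycle.equivalence _)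
      fun _ => hd.symm.sameCycle_mul_mul_swap_apply hu
  have hmu : m u = c₂ v := by
    simp [m, (hd (c₂ v)).resolve_right (by simpa using hv)]
  have huv : m.SameCycle u v := by
    have hu' : m.SameCycle u (c₂ v) := hmu ▸ sameCycle_apply_right.2 SameCycle.rfl
    exact hu'.trans (hc₂ (sameCycle_apply_right.2 SameCycle.rfl)).symm
  refine ⟨u, ?_, fun y hy => ?_⟩
  · rw [hmu]
    rintro h
    exact hu ((hd u).resolve_right (h ▸ c₂.injective.ne hv))
  · have hy' : c₁ y ≠ y ∨ c₂ y ≠ y := by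
      by_contra! h
      have hyu : y ≠ u := by rintro rfl; exact hu h.1
      have hyv : y ≠ v := by rintro rfl; exact hv h.2
      exact hy (by simp [m, swap_apply_of_ne_of_ne hyu hyv, h.1, h.2])
    rcases hy' with hy₁ | hy₂
    · exact hc₁ (h₁.sameCycle hu hy₁)
    · exact huv.trans (hc₂ (h₂.sameCycle hv hy₂))

theorem card_cycleType_mul_swap_add_one [Fintype α] {σ : Perm α} (hu : σ u ≠ u)
    (hv : σ v ≠ v) (huv : ¬σ.SameCycle u v) :
    Multiset.card (σ * swap u v).cycleType + 1 = Multiset.card σ.cycleType := by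
  set c₁ := σ.cycleOf u
  set c₂ := σ.cycleOf v
  have h₁ : c₁.IsCycle := σ.isCycle_cycleOf hu
  have h₂ : c₂.IsCycle := σ.isCycle_cycleOf hv
  have hu₁ : c₁ u ≠ u := by rwa [cycleOf_apply_self]
  have hv₂ : c₂ v ≠ v := by rwa [cycleOf_apply_self]
  have hc₁ : c₁ ∈ σ.cycleFactorsFinset := cycleOf_mem_cycleFactorsFinset_iff.2 (mem_support.2 hu)
  have hc₂ : c₂ ∈ σ.cycleFactorsFinset := cycleOf_mem_cycleFactorsFinset_iff.2 (mem_support.2 hv)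
  have hne : c₁ ≠ c₂ := fun h => hu₁ (by
    rw [h]; exact cycleOf_apply_of_not_sameCycle fun h' => huv h'.symm)
  have hd : c₁.Disjoint c₂ := cycleFactorsFinset_pairwise_disjoint σ hc₁ hc₂ hne
  set g := σ * c₁⁻¹
  have hc₂' : c₂ ∈ g.cycleFactorsFinset := by
    rw [cycleFactorsFinset_mul_inv_mem_eq_sdiff hc₁]
    simp [hc₂, hne.symm]
  set ρ := g * c₂⁻¹
  have hρ₂ : ρ.Disjoint c₂ := disjoint_mul_inv_of_mem_cycleFactorsFinset hc₂'
  have hρ₁ : ρ.Disjoint c₁ :=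
    (disjoint_mul_inv_of_mem_cycleFactorsFinset hc₁).mul_left hd.symm.inv_left
  have hρswap : ρ.Disjoint (swap u v) := by
    intro x
    rcases eq_or_ne x u with rfl | hxu
    · exact .inl ((hρ₁ x).resolve_right hu₁)
    rcases eq_or_ne x v with rfl | hxv
    · exact .inl ((hρ₂ x).resolve_right hv₂)
    exact .inr (swap_apply_of_ne_of_ne hxu hxv)
  have hσ : σ = ρ * (c₁ * c₂) := by rw [hd.commute.eq]; simp [ρ, g, mul_assoc]
  have hτ : σ * swap u v = ρ * (c₁ * c₂ * swap u v) := by rw [hσ, mul_assoc]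
  rw [hτ, (hρ₁.mul_right hρ₂ |>.mul_right hρswap).cycleType_mul,
    (hd.isCycle_mul_mul_swap h₁ h₂ hu₁ hv₂).cycleType, hσ, (hρ₁.mul_right hρ₂).cycleType_mul,
    hd.cycleType_mul, h₁.cycleType, h₂.cycleType]
  simp

end Equiv.Perm

open Equiv Perm in
theorem IsCycleFactor.mul_swap {V : Type*} [DecidableEq V] {A : V → V → Prop} {σ : Perm V}
    (hσ : IsCycleFactor A σ) {u v : V} (huv : ¬σ.SameCycle u v) (hu : A u (σ v))
    (hv : A v (σ u)) : IsCycleFactor A (σ * swap u v) := by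
  intro x
  rcases eq_or_ne x u with rfl | hxu
  · refine ⟨by simpa using hu, fun h => huv ?_⟩
    simp only [Perm.mul_apply, swap_apply_left] at h
    exact (h ▸ sameCycle_apply_right.2 SameCycle.rfl : σ.SameCycle v x).symm
  rcases eq_or_ne x v with rfl | hxv
  · refine ⟨by simpa using hv, fun h => huv ?_⟩
    simp only [Perm.mul_apply, swap_apply_right] at h
    exact h ▸ sameCycle_apply_right.2 SameCycle.rfl
  simpa [swap_apply_of_ne_of_ne hxu hxv] using hσ x

theorem min_cycle_factor_no_double_arc_general {V : Type*} [Fintype V] [DecidableEq V]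
    (A : V → V → Prop) (σ : Equiv.Perm V) (hσ : IsCycleFactor A σ)
    (hmin : ∀ τ : Equiv.Perm V, IsCycleFactor A τ →
      Multiset.card σ.cycleType ≤ Multiset.card τ.cycleType)
    (u v : V) (huv : ¬ σ.SameCycle u v) :
    ¬ (A u (σ v) ∧ A v (σ u)) := by
  rintro ⟨hu, hv⟩
  have hmerged := hmin _ (hσ.mul_swap huv hu hv)
  have hfewer := Equiv.Perm.card_cycleType_mul_swap_add_one (hσ u).2 (hσ v).2 huv
  omega

/-- In a cycle factor with the minimum number `t ≥ 2` of cycles, if `u` and `v`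
lie on different cycles then the arcs `u → v⁺` and `v → u⁺` are not both present.
The cycle factor is encoded as a fixed-point-free permutation `σ` following the
arcs, its number of cycles being `σ.cycleType.card` and the successor of `u`
being `σ u`. -/
theorem min_cycle_factor_no_double_arc {V : Type*} [Fintype V] [DecidableEq V]
    (A : V → V → Prop) (hloopless : ∀ v, ¬ A v v)
    (σ : Equiv.Perm V) (hσ : IsCycleFactor A σ)
    (hmin : ∀ τ : Equiv.Perm V, IsCycleFactor A τ →
      Multiset.card σ.cycleType ≤ Multiset.card τ.cycleType)
    (ht : 2 ≤ Multiset.card σ.cycleType)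
    (u v : V) (huv : ¬ σ.SameCycle u v) :
    ¬ (A u (σ v) ∧ A v (σ u)) :=
  min_cycle_factor_no_double_arc_general A σ hσ hmin u v huv
end

section
/- If a graph G contains a vertex x of degree 1 whose unique neighbor y has another neighbor z ≠ x, then G is not s-quadrangular (as an undirected graph); the pair {x, z} witnesses the failure of the s-quadrangular condition, since x and z have y as a common neighbor but cannot have two common neighbors, x having degree 1. -/
/-- The union of all pairwise common neighborhoods of distinct members of `S` in `G`. -/
def commonUnionG {V : Type*} (G : SimpleGraph V) (S : Set V) : Set V :=
  {w | ∃ u ∈ S, ∃ v ∈ S, u ≠ v ∧ G.Adj u w ∧ G.Adj v w}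

/-- A graph is s-quadrangular if for every set `S` of at least two vertices in
which every member shares a neighbor with another member, the union of all
pairwise common neighborhoods has size at least `|S|`. -/
def SQuadG {V : Type*} (G : SimpleGraph V) : Prop :=
  ∀ S : Set V, 2 ≤ S.ncard →
    (∀ u ∈ S, ∃ v ∈ S, v ≠ u ∧ (G.neighborSet u ∩ G.neighborSet v).Nonempty) →
    S.ncard ≤ (commonUnionG G S).ncard

/-- If `G` has a vertex `x` of degree 1 whose unique neighbor `y` has another
neighbor `z ≠ x`, then `G` is not s-quadrangular. -/
theorem degree_one_not_squad {V : Type*} [Fintype V] (G : SimpleGraph V)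
    (x y z : V) (hx : G.neighborSet x = {y}) (hzx : z ≠ x) (hyz : G.Adj y z) :
    ¬ SQuadG G := by
  intro h
  have hxy : G.Adj x y := by
    have : y ∈ G.neighborSet x := by rw [hx]; rfl
    exact this
  set S : Set V := {x, z} with hS
  have hcard : S.ncard = 2 := Set.ncard_pair hzx.symm
  have hsub : commonUnionG G S ⊆ {y} := by
    rintro w ⟨u, hu, v, hv, huv, hu', hv'⟩
    have hwx : G.Adj x w := by
      rcases hu with rfl | rfl
      · exact hu'
      · rcases hv with rfl | rfl
        · exact hv'
        · exact absurd rfl huv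
    have : w ∈ G.neighborSet x := hwx
    rw [hx] at this
    exact this
  have hle : (commonUnionG G S).ncard ≤ 1 := by
    calc (commonUnionG G S).ncard ≤ ({y} : Set V).ncard :=
          Set.ncard_le_ncard hsub (Set.finite_singleton y)
      _ = 1 := Set.ncard_singleton y
  have := h S (by omega) ?_
  · omega
  · intro u hu
    rcases hu with rfl | rfl
    · exact ⟨z, Or.inr rfl, hzx, y, hxy, hyz.symm⟩
    · exact ⟨x, Or.inl rfl, hzx.symm, y, hyz.symm, hxy⟩
end

section
/- Every connected s-quadrangular graph G with at least three vertices has minimum degree at least 2. -/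
/-- Every connected s-quadrangular graph with at least three vertices has
minimum degree at least 2. -/
theorem connected_squad_min_degree_two {V : Type*} [Fintype V] (G : SimpleGraph V)
    [DecidableRel G.Adj] (hconn : G.Connected) (hcard : 3 ≤ Fintype.card V)
    (hsq : SQuadG G) : ∀ v : V, 2 ≤ G.degree v := by
  classical
  intro v
  by_contra hdeg
  push_neg at hdeg
  -- find w ≠ v (there are at least 3 vertices)
  have hdeg1 : G.degree v ≤ 1 := Nat.lt_succ_iff.mp hdeg
  -- unique neighbor property will come after we find a neighbor
  -- First, find some vertex w0 ≠ v
  obtain ⟨w0, hw0⟩ : ∃ w0 : V, w0 ≠ v := by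
    by_contra hc
    push_neg at hc
    have : Fintype.card V ≤ 1 := by
      have : (Finset.univ : Finset V) ⊆ {v} := fun x _ => by
        simp [hc x]
      simpa using Finset.card_le_card this
    omega
  -- get a path from w0 to v; the last-but-one vertex is a neighbor u of v
  obtain ⟨p0⟩ := hconn.preconnected v w0
  obtain ⟨u, hu⟩ : ∃ u, G.Adj v u := by
    cases p0 with
    | nil => exact absurd rfl hw0.symm
    | cons h q => exact ⟨_, h⟩
  -- uniqueness of neighbor
  have huniq : ∀ x, G.Adj v x → x = u := by
    intro x hx
    have hxm : x ∈ G.neighborFinset v := by simpa using hx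
    have hum : u ∈ G.neighborFinset v := by simpa using hu
    exact Finset.card_le_one.mp hdeg1 x hxm u hum
  -- find w ≠ v, w ≠ u
  obtain ⟨w, hwv, hwu⟩ : ∃ w : V, w ≠ v ∧ w ≠ u := by
    by_contra hc
    push_neg at hc
    have hsub : (Finset.univ : Finset V) ⊆ {v, u} := fun x _ => by
      by_cases hxv : x = v
      · simp [hxv]
      · simp [hc x hxv]
    have h2 : Fintype.card V ≤ 2 := by
      calc Fintype.card V = Finset.univ.card := rfl
        _ ≤ ({v, u} : Finset V).card := Finset.card_le_card hsub
        _ ≤ 2 := by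
          apply le_trans (Finset.card_insert_le v {u})
          simp
    omega
  -- take a path from v to w
  obtain ⟨p1⟩ := hconn.preconnected v w
  obtain ⟨p, hp⟩ : ∃ p : G.Walk v w, p.IsPath := ⟨(p1.toPath : G.Path v w).1, (p1.toPath).2⟩
  -- find c adjacent to u with c ≠ v
  obtain ⟨c, hc_adj, hcv⟩ : ∃ c, G.Adj u c ∧ c ≠ v := by
    cases p with
    | nil => exact absurd rfl hwv.symm
    | @cons _ b _ h q =>
      have hb : b = u := huniq b h
      subst hb
      cases q with
      | nil => exact absurd rfl hwu.symm
      | @cons _ c _ h2 q2 =>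
        refine ⟨c, h2, ?_⟩
        rw [SimpleGraph.Walk.cons_isPath_iff] at hp
        have hvs : v ∉ (SimpleGraph.Walk.cons h2 q2).support := hp.2
        intro hceq
        apply hvs
        rw [SimpleGraph.Walk.support_cons]
        exact List.mem_cons_of_mem _ (hceq ▸ q2.start_mem_support)
  -- set S = {v, c}
  have hvc : v ≠ c := fun h => hcv h.symm
  set S : Set V := {v, c} with hS
  have hcard2 : S.ncard = 2 := Set.ncard_pair hvc
  have hcond : ∀ a ∈ S, ∃ b ∈ S, b ≠ a ∧ (G.neighborSet a ∩ G.neighborSet b).Nonempty := by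
    intro a ha
    rcases ha with rfl | ha
    · exact ⟨c, Or.inr rfl, hvc.symm, ⟨u, hu, hc_adj.symm⟩⟩
    · rcases ha with rfl
      exact ⟨v, Or.inl rfl, hvc, ⟨u, hc_adj.symm, hu⟩⟩
  have hle := hsq S (by omega) hcond
  -- commonUnionG G S ⊆ {u}
  have hsub : commonUnionG G S ⊆ {u} := by
    rintro x ⟨a, ha, b, hb, hab, hax, hbx⟩
    have : G.Adj v x := by
      rcases ha with rfl | ha
      · exact hax
      · rcases ha with rfl
        rcases hb with rfl | hb
        · exact hbx
        · rcases hb with rfl; exact absurd rfl hab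
    simp [huniq x this]
  have h1 : (commonUnionG G S).ncard ≤ 1 := by
    have := Set.ncard_le_ncard hsub (Set.finite_singleton u)
    simpa using this
  omega
end

section
/- Let C₁ ∪ ⋯ ∪ C_m be a 2-factor of a graph G with the minimum number m ≥ 2 of cycles. If u lies on C_i, v lies on C_j with i ≠ j, and uv ∈ E(G), then there is no edge between the set of the two neighbors of u on C_i and the set of the two neighbors of v on C_j. -/
/-- A 2-factor of `G`, encoded as a permutation `σ` that follows edges of `G`
and has all cycles of length at least 3; its cycles are the vertex-disjoint
cycles of the 2-factor, and the two neighbors of `u` on its cycle are `σ u`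
and `σ⁻¹ u`. -/
def IsTwoFactorPerm {V : Type*} (G : SimpleGraph V) (σ : Equiv.Perm V) : Prop :=
  (∀ v, G.Adj v (σ v)) ∧ (∀ v, σ (σ v) ≠ v)

namespace Finset

theorem card_image_lt_card_image_of_factorsThrough {α β γ : Type*} [DecidableEq β]
    [DecidableEq γ] {f : α → β} {g : α → γ} (hgf : Function.FactorsThrough g f)
    {s : Finset α} {x y : α} (hx : x ∈ s) (hy : y ∈ s) (hf : f x ≠ f y) (hg : g x = g y) :
    #(s.image g) < #(s.image f) := by
  set F := Function.extend f g fun _ ↦ g x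
  have hF : ∀ a, F (f a) = g a := hgf.extend_apply _
  have himage : s.image g = (s.image f).image F := by
    rw [image_image]; exact image_congr fun a _ ↦ (hF a).symm
  rw [himage]
  refine card_image_le.lt_of_ne fun hcard ↦ hf ?_
  exact card_image_iff.mp hcard (mem_image_of_mem f hx) (mem_image_of_mem f hy) (by simp [hF, hg])

end Finset

open Finset

namespace Equiv.Perm

variable {α : Type*}

theorem SameCycle.of_forall_sameCycle_apply {f g : Perm α} (hfg : ∀ x, g.SameCycle x (f x))
    {x y : α} (h : f.SameCycle x y) : g.SameCycle x y := by
  obtain ⟨n, rfl⟩ := h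
  induction n using Int.induction_on with
  | zero => exact SameCycle.refl g x
  | succ n ih => rw [add_comm, zpow_one_add, mul_apply]; exact ih.trans (hfg _)
  | pred n ih =>
    rw [sub_eq_neg_add, zpow_add, zpow_neg_one, mul_apply]
    exact ih.trans (by simpa using (hfg (f⁻¹ ((f ^ (-(n : ℤ))) x))).symm)

variable [Fintype α] [DecidableEq α]

theorem cycleFactorsFinset_eq_image_cycleOf (f : Perm α) :
    f.cycleFactorsFinset = f.support.image f.cycleOf := by
  ext c
  simp only [mem_image]
  constructor
  · intro hc
    obtain ⟨a, ha⟩ := (mem_cycleFactorsFinset_iff.mp hc).1.nonempty_support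
    exact ⟨a, mem_cycleFactorsFinset_support_le hc ha, (cycle_is_cycleOf ha hc).symm⟩
  · rintro ⟨a, ha, rfl⟩
    exact cycleOf_mem_cycleFactorsFinset_iff.mpr ha

theorem card_cycleType_eq_card_image_cycleOf (f : Perm α) :
    Multiset.card f.cycleType = #(f.support.image f.cycleOf) := by
  rw [cycleType_def, Multiset.card_map, ← cycleFactorsFinset_eq_image_cycleOf]
  rfl

theorem card_cycleType_lt_of_sameCycle_imp {σ τ : Perm α} (hσ : ∀ x, σ x ≠ x)
    (hστ : ∀ ⦃x y⦄, σ.SameCycle x y → τ.SameCycle x y) {u w : α}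
    (hσuw : ¬σ.SameCycle u w) (hτuw : τ.SameCycle u w) :
    Multiset.card τ.cycleType < Multiset.card σ.cycleType := by
  have hτ : ∀ x, τ x ≠ x := fun x hx ↦
    hσ x ((hστ (sameCycle_apply_right.mpr (SameCycle.refl σ x))).eq_of_left hx).symm
  have hsupp : ∀ π : Perm α, (∀ x, π x ≠ x) → π.support = univ := fun π hπ ↦
    eq_univ_of_forall fun x ↦ mem_support.mpr (hπ x)
  have hσcycleOf : ∀ x y, σ.cycleOf x = σ.cycleOf y → σ.SameCycle x y := fun x y ↦
    (sameCycle_iff_cycleOf_eq_of_mem_support (by simp [hσ]) (by simp [hσ])).mpr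
  rw [card_cycleType_eq_card_image_cycleOf, card_cycleType_eq_card_image_cycleOf, hsupp σ hσ,
    hsupp τ hτ]
  exact card_image_lt_card_image_of_factorsThrough
    (fun x y h ↦ (hστ (hσcycleOf x y h)).cycleOf_eq) (mem_univ u) (mem_univ w)
    (fun h ↦ hσuw (hσcycleOf u w h)) hτuw.cycleOf_eq

theorem sameCycle_mul_swap {π : Perm α} {u w : α} (huw : ¬π.SameCycle u w) :
    (π * swap u w).SameCycle u w := by
  set τ := π * swap u w
  -- `τ` enters the `π`-cycle of `w` from `u`, then follows `π` until it is back at `w`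
  have hu : τ.SameCycle u (π w) := ⟨1, by simp [τ]⟩
  have key : ∀ n : ℕ, τ.SameCycle u (π ((π ^ n) w)) := by
    intro n
    induction n with
    | zero => simpa using hu
    | succ n ih =>
      rw [pow_succ', mul_apply]
      set y := π ((π ^ n) w)
      by_cases hyw : y = w
      · rwa [hyw]
      have hyu : y ≠ u := by
        rintro rfl
        exact huw (sameCycle_apply_right.mpr (sameCycle_pow_right.mpr (SameCycle.refl π w))).symm
      have hτy : τ y = π y := by simp [τ, swap_apply_of_ne_of_ne hyu hyw]
      exact hτy ▸ sameCycle_apply_right.mpr ih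
  obtain ⟨n, -, hn⟩ := (sameCycle_symm_apply_right.mpr (SameCycle.refl π w)).exists_pow_eq'
  simpa [hn] using key n

theorem card_cycleType_mul_swap_lt {π : Perm α} (hπ : ∀ x, π x ≠ x) {u w : α}
    (huw : ¬π.SameCycle u w) :
    Multiset.card (π * swap u w).cycleType < Multiset.card π.cycleType := by
  have hτ : (π * swap u w).SameCycle u w := sameCycle_mul_swap huw
  have hswap : ∀ x, (π * swap u w).SameCycle x (swap u w x) := by
    intro x
    rw [swap_apply_def]
    split_ifs with hxu hxw
    · exact hxu ▸ hτ
    · exact hxw ▸ hτ.symm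
    · exact SameCycle.refl _ _
  have hstep : ∀ x, (π * swap u w).SameCycle x (π x) := fun x ↦ by
    simpa using sameCycle_apply_right.mpr (hswap x)
  exact card_cycleType_lt_of_sameCycle_imp hπ (fun _ _ h ↦ h.of_forall_sameCycle_apply hstep)
    huw hτ

def reverseCycleAt (σ : Perm α) (v : α) : Perm α :=
  σ * (σ.cycleOf v)⁻¹ * (σ.cycleOf v)⁻¹

theorem reverseCycleAt_apply (σ : Perm α) (v x : α) :
    σ.reverseCycleAt v x = if σ.SameCycle v x then σ⁻¹ x else σ x := by
  simp only [reverseCycleAt, mul_apply, cycleOf_inv, cycleOf_apply, sameCycle_inv]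
  split_ifs <;> simp_all

theorem reverseCycleAt_apply_of_sameCycle {σ : Perm α} {v x : α} (h : σ.SameCycle v x) :
    σ.reverseCycleAt v x = σ⁻¹ x := by
  rw [reverseCycleAt_apply, if_pos h]

theorem reverseCycleAt_apply_of_not_sameCycle {σ : Perm α} {v x : α} (h : ¬σ.SameCycle v x) :
    σ.reverseCycleAt v x = σ x := by
  rw [reverseCycleAt_apply, if_neg h]

theorem cycleType_reverseCycleAt (σ : Perm α) (v : α) :
    (σ.reverseCycleAt v).cycleType = σ.cycleType := by
  by_cases hv : σ v = v
  · simp [reverseCycleAt, (cycleOf_eq_one_iff σ).mpr hv]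
  have hc : σ.cycleOf v ∈ σ.cycleFactorsFinset :=
    cycleOf_mem_cycleFactorsFinset_iff.mpr (mem_support.mpr hv)
  have hdisj := disjoint_mul_inv_of_mem_cycleFactorsFinset hc
  calc (σ.reverseCycleAt v).cycleType
      = (σ * (σ.cycleOf v)⁻¹).cycleType + (σ.cycleOf v).cycleType := by
        rw [reverseCycleAt, hdisj.inv_right.cycleType_mul, cycleType_inv]
    _ = σ.cycleType := by rw [← hdisj.cycleType_mul, inv_mul_cancel_right]

theorem SameCycle.of_reverseCycleAt {σ : Perm α} {v x y : α}
    (h : (σ.reverseCycleAt v).SameCycle x y) : σ.SameCycle x y := by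
  refine h.of_forall_sameCycle_apply fun z ↦ ?_
  rw [reverseCycleAt_apply]
  split_ifs
  · exact sameCycle_symm_apply_right.mpr (SameCycle.refl σ z)
  · exact sameCycle_apply_right.mpr (SameCycle.refl σ z)

end Equiv.Perm

namespace IsTwoFactorPerm

open Equiv Equiv.Perm

variable {V : Type*} {G : SimpleGraph V} {σ : Perm V}

theorem apply_ne_self (h : IsTwoFactorPerm G σ) (x : V) : σ x ≠ x :=
  fun hx ↦ h.2 x (by rw [hx, hx])

variable [DecidableEq V]

theorem mul_swap (h : IsTwoFactorPerm G σ) {u w : V} (huw : ¬σ.SameCycle u w)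
    (hu : G.Adj u (σ w)) (hw : G.Adj w (σ u)) : IsTwoFactorPerm G (σ * swap u w) := by
  refine ⟨fun x ↦ ?_, fun x ↦ ?_⟩
  · simp only [mul_apply, swap_apply_def]
    split_ifs with hxu hxw
    · exact hxu ▸ hu
    · exact hxw ▸ hw
    · exact h.1 x
  · have hσ := h.apply_ne_self
    have hσσ := h.2
    have hstep : ∀ y, σ.SameCycle y (σ y) := fun _ ↦ sameCycle_apply_right.mpr .rfl
    have hne : ∀ {x y}, σ.SameCycle u x → σ.SameCycle w y → x ≠ y := fun hx hy e ↦
      huw (hx.trans (e ▸ hy.symm))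
    -- a 2-cycle of `σ * swap u w` through `u` or `w` would link the `σ`-cycles of `u` and `w`
    have h1 : σ w ≠ u := (hne .rfl (hstep w)).symm
    have h2 : σ u ≠ w := hne (hstep u) .rfl
    have h3 : σ (σ w) ≠ u := (hne .rfl ((hstep w).trans (hstep _))).symm
    have h4 : σ (σ u) ≠ w := hne ((hstep u).trans (hstep _)) .rfl
    simp only [mul_apply, swap_apply_def]
    grind

variable [Fintype V]

theorem reverseCycleAt (h : IsTwoFactorPerm G σ) (v : V) :
    IsTwoFactorPerm G (σ.reverseCycleAt v) := by
  refine ⟨fun x ↦ ?_, fun x ↦ ?_⟩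
  · rw [reverseCycleAt_apply]
    split_ifs
    · simpa using (h.1 (σ⁻¹ x)).symm
    · exact h.1 x
  · by_cases hx : σ.SameCycle v x
    · have hx' : σ.SameCycle v (σ⁻¹ x) := sameCycle_symm_apply_right.mpr hx
      rw [reverseCycleAt_apply_of_sameCycle hx, reverseCycleAt_apply_of_sameCycle hx']
      exact fun hxx ↦ h.2 (σ⁻¹ (σ⁻¹ x)) (by simpa using hxx.symm)
    · have hx' : ¬σ.SameCycle v (σ x) := fun h ↦ hx (sameCycle_apply_right.mp h)
      rw [reverseCycleAt_apply_of_not_sameCycle hx, reverseCycleAt_apply_of_not_sameCycle hx']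
      exact h.2 x

theorem not_adj_and_adj_of_minimal (h : IsTwoFactorPerm G σ)
    (hmin : ∀ τ, IsTwoFactorPerm G τ →
      Multiset.card σ.cycleType ≤ Multiset.card τ.cycleType)
    {u w : V} (huw : ¬σ.SameCycle u w) : ¬(G.Adj u (σ w) ∧ G.Adj w (σ u)) :=
  fun ⟨hu, hw⟩ ↦
  (hmin _ (h.mul_swap huw hu hw)).not_gt (card_cycleType_mul_swap_lt h.apply_ne_self huw)

end IsTwoFactorPerm

open Equiv.Perm

theorem min_two_factor_no_cross_edge_general {V : Type*} [Fintype V] [DecidableEq V]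
    (G : SimpleGraph V) (σ : Equiv.Perm V) (hσ : IsTwoFactorPerm G σ)
    (hmin : ∀ τ : Equiv.Perm V, IsTwoFactorPerm G τ →
      Multiset.card σ.cycleType ≤ Multiset.card τ.cycleType)
    (u v : V) (huv : ¬ σ.SameCycle u v) (he : G.Adj u v) :
    ∀ a ∈ ({σ u, σ⁻¹ u} : Set V), ∀ b ∈ ({σ v, σ⁻¹ v} : Set V), ¬ G.Adj a b := by
  have hminRev : ∀ x τ, IsTwoFactorPerm G τ →
      Multiset.card (σ.reverseCycleAt x).cycleType ≤ Multiset.card τ.cycleType := by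
    simpa only [cycleType_reverseCycleAt] using fun _ ↦ hmin
  rintro a (rfl | rfl) b (rfl | rfl) hab
  · refine (hσ.reverseCycleAt v).not_adj_and_adj_of_minimal (hminRev v)
      (u := u) (w := σ v) (fun h ↦ huv (sameCycle_apply_right.mp h.of_reverseCycleAt))
      ⟨?_, ?_⟩
    · rw [reverseCycleAt_apply_of_sameCycle (sameCycle_apply_right.mpr .rfl)]
      simpa using he
    · rw [reverseCycleAt_apply_of_not_sameCycle (fun h ↦ huv h.symm)]
      exact hab.symm
  · exact hσ.not_adj_and_adj_of_minimal hmin (u := u) (w := σ⁻¹ v)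
      (by simpa using huv) ⟨by simpa using he, hab.symm⟩
  · exact hσ.not_adj_and_adj_of_minimal hmin (u := σ⁻¹ u) (w := v)
      (by simpa using huv) ⟨hab, by simpa using he.symm⟩
  · refine (hσ.reverseCycleAt u).not_adj_and_adj_of_minimal (hminRev u)
      (u := σ⁻¹ v) (w := u) (fun h ↦ huv (by simpa using h.of_reverseCycleAt.symm))
      ⟨?_, ?_⟩
    · rw [reverseCycleAt_apply_of_sameCycle .rfl]
      exact hab.symm
    · rw [reverseCycleAt_apply_of_not_sameCycle (by simpa using huv)]
      simpa using he

/-- In a 2-factor with the minimum number `m ≥ 2` of cycles, if `u` and `v` lie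
on different cycles and `uv` is an edge of `G`, then there is no edge between
the two cycle-neighbors of `u` and the two cycle-neighbors of `v`. -/
theorem min_two_factor_no_cross_edge {V : Type*} [Fintype V] [DecidableEq V]
    (G : SimpleGraph V) (σ : Equiv.Perm V) (hσ : IsTwoFactorPerm G σ)
    (hmin : ∀ τ : Equiv.Perm V, IsTwoFactorPerm G τ →
      Multiset.card σ.cycleType ≤ Multiset.card τ.cycleType)
    (hm : 2 ≤ Multiset.card σ.cycleType)
    (u v : V) (huv : ¬ σ.SameCycle u v) (he : G.Adj u v) :
    ∀ a ∈ ({σ u, σ⁻¹ u} : Set V), ∀ b ∈ ({σ v, σ⁻¹ v} : Set V), ¬ G.Adj a b :=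
  min_two_factor_no_cross_edge_general G σ hσ hmin u v huv he
end
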